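/- arXiv:2307.01736 — 4 statements merged into one kernel-verified Lean document; each statement's English description precedes it below -/
import Mathlib

section
/- The set {t ∈ ℂ : x₀(t) = x₁(t) and y₀(t) = y₁(t)} is empty, while the set {t ∈ ℂ : x₀(t) = x₁(t) and y₀(t) = −y₁(t)} has exactly two elements (namely the two roots of 125t² − 840t + 1324). Consequently the triple (C₃, L₁; 𝒬) has splitting type (0, 2). -/
/- The lift `C₃⁺` of the weak contact conic `C₃ : x = x₀(t)` to the double cover
`y² = (x - t²)(x² - 10tx + 25x - 36)` branched along `𝒬 = C₁ + C₂` is parametrized by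
`(t, x₀(t), y₀(t))`; the two lifts `Lᵢ±` of the bitangent `Lᵢ : x = xᵢ(t)` are `y = ±yᵢ(t)`. -/

noncomputable def x0 (t : ℂ) : ℂ := 5 / 4 * t ^ 2 - 2 * t + 3
noncomputable def y0 (t : ℂ) : ℂ := 5 / 8 * t ^ 3 - 6 * t ^ 2 + 31 / 2 * t - 12
noncomputable def x1 (t : ℂ) : ℂ := 32 / 5 * t - 256 / 25
noncomputable def y1 (t : ℂ) : ℂ := 24 / 5 * t ^ 2 - 726 / 25 * t + 5472 / 125
noncomputable def x2 (t : ℂ) : ℂ := 0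
noncomputable def y2 (t : ℂ) : ℂ := -6 * t
noncomputable def x3 (t : ℂ) : ℂ := 10 * t - 25
noncomputable def y3 (t : ℂ) : ℂ := 6 * t - 30
noncomputable def x4 (t : ℂ) : ℂ := 18 / 5 * t - 81 / 25
noncomputable def y4 (t : ℂ) : ℂ := 24 / 5 * t ^ 2 - 474 / 25 * t + 2322 / 125

/-- `C₃⁺ ∩ L₁⁺ = ∅` while `C₃⁺ ∩ L₁⁻` consists of the two roots of
`125t² - 840t + 1324`: the triple `(C₃, L₁; 𝒬)` has splitting type `(0, 2)`. -/
theorem splitting_type_C3_L1 :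
    {t : ℂ | x0 t = x1 t ∧ y0 t = y1 t} = ∅ ∧
    {t : ℂ | x0 t = x1 t ∧ y0 t = -y1 t} =
      {t : ℂ | 125 * t ^ 2 - 840 * t + 1324 = 0} ∧
    Set.ncard {t : ℂ | x0 t = x1 t ∧ y0 t = -y1 t} = 2 := by
  have key : {t : ℂ | x0 t = x1 t ∧ y0 t = -y1 t} =
      {t : ℂ | 125 * t ^ 2 - 840 * t + 1324 = 0} := by
    ext t
    simp only [Set.mem_setOf_eq, x0, x1, y0, y1]
    constructor
    · rintro ⟨h1, _⟩
      linear_combination 100 * h1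
    · intro h
      constructor
      · linear_combination h / 100
      · linear_combination (t / 200 + 3 / 125) * h
  refine ⟨?_, key, ?_⟩
  · ext t
    simp only [Set.mem_setOf_eq, Set.mem_empty_iff_false, iff_false, not_and]
    intro h1 h2
    simp only [x0, x1] at h1
    simp only [y0, y1] at h2
    have : (1 : ℂ) = 0 := by
      linear_combination (100 * (-67 / 56448 * t ^ 2 + 1579 / 88200 * t - 467 / 10500)) * h1
        + (1675 / 7056 * t - 947 / 882) * h2
    exact one_ne_zero this
  · have h109 : ((Real.sqrt 109 : ℝ) : ℂ) ^ 2 = 109 := by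
      norm_cast
      exact Real.sq_sqrt (by norm_num)
    set s : ℂ := ((Real.sqrt 109 : ℝ) : ℂ) with hs
    have hspos : (Real.sqrt 109 : ℝ) > 0 := Real.sqrt_pos.mpr (by norm_num)
    have hab : ((84 + 2 * s) / 25 : ℂ) ≠ (84 - 2 * s) / 25 := by
      intro h
      have : s = 0 := by linear_combination 25 / 4 * h
      rw [hs] at this
      exact absurd (by exact_mod_cast this : (Real.sqrt 109 : ℝ) = 0) (ne_of_gt hspos)
    have hset : {t : ℂ | 125 * t ^ 2 - 840 * t + 1324 = 0} =
        {(84 + 2 * s) / 25, (84 - 2 * s) / 25} := by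
      ext t
      simp only [Set.mem_setOf_eq, Set.mem_insert_iff, Set.mem_singleton_iff]
      constructor
      · intro h
        have hf : (t - (84 + 2 * s) / 25) * (t - (84 - 2 * s) / 25) = 0 := by
          linear_combination h / 125 - h109 * (4 / 625)
        rcases mul_eq_zero.mp hf with h' | h'
        · left; linear_combination h'
        · right; linear_combination h'
      · rintro (rfl | rfl) <;> · linear_combination 125 * (4 / 625 : ℂ) * h109
    rw [key, hset]
    exact Set.ncard_pair hab
end

section
/- The set {t ∈ ℂ : x₀(t) = 0 and y₀(t) = y₂(t)} (i.e., y₀(t) = −6t) is empty, while the set {t ∈ ℂ : x₀(t) = 0 and y₀(t) = −y₂(t)} (i.e., y₀(t) = 6t) has exactly two elements (namely the two roots of 5t² − 8t + 12). Consequently the triple (C₃, L₂; 𝒬) has splitting type (0, 2). -/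
/-- `C₃⁺ ∩ L₂⁺ = ∅` while `C₃⁺ ∩ L₂⁻` consists of the two roots of
`5t² - 8t + 12`: the triple `(C₃, L₂; 𝒬)` has splitting type `(0, 2)`. -/
theorem splitting_type_C3_L2 :
    {t : ℂ | x0 t = 0 ∧ y0 t = y2 t} = ∅ ∧
    {t : ℂ | x0 t = 0 ∧ y0 t = -y2 t} =
      {t : ℂ | 5 * t ^ 2 - 8 * t + 12 = 0} ∧
    Set.ncard {t : ℂ | x0 t = 0 ∧ y0 t = -y2 t} = 2 := by
  have h11 : ((Real.sqrt 11 : ℝ) : ℂ) ^ 2 = 11 := by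
    rw [← Complex.ofReal_pow, Real.sq_sqrt (by norm_num : (0:ℝ) ≤ 11)]
    norm_num
  set a : ℂ := (4 + 2 * Complex.I * Real.sqrt 11) / 5 with ha
  set b : ℂ := (4 - 2 * Complex.I * Real.sqrt 11) / 5 with hb
  have key : ∀ t : ℂ, 5 * t ^ 2 - 8 * t + 12 = 5 * (t - a) * (t - b) := by
    intro t
    rw [ha, hb]
    linear_combination (4/5 : ℂ) * ((Real.sqrt 11 : ℝ) : ℂ) ^ 2 * Complex.I_sq - (4/5 : ℂ) * h11
  have hset2 : {t : ℂ | x0 t = 0 ∧ y0 t = -y2 t} =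
      {t : ℂ | 5 * t ^ 2 - 8 * t + 12 = 0} := by
    ext t
    simp only [Set.mem_setOf_eq, x0, y0, y2]
    constructor
    · rintro ⟨h1, _⟩
      linear_combination 4 * h1
    · intro h
      refine ⟨by linear_combination h / 4, by linear_combination (t / 8 - 1) * h⟩
  refine ⟨?_, hset2, ?_⟩
  · ext t
    simp only [Set.mem_setOf_eq, Set.mem_empty_iff_false, iff_false, not_and, x0, y0, y2]
    intro h1 h2
    have ht : (12 : ℂ) * t = 0 := by
      linear_combination h2 - 4 * (t / 8 - 1) * h1
    have ht0 : t = 0 := by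
      rcases mul_eq_zero.mp ht with h | h
      · norm_num at h
      · exact h
    rw [ht0] at h1
    norm_num at h1
  · rw [hset2]
    have hpair : {t : ℂ | 5 * t ^ 2 - 8 * t + 12 = 0} = {a, b} := by
      ext t
      simp only [Set.mem_setOf_eq, Set.mem_insert_iff, Set.mem_singleton_iff, key t]
      constructor
      · intro h
        rcases mul_eq_zero.mp h with h' | h'
        · rcases mul_eq_zero.mp h' with h'' | h''
          · norm_num at h''
          · left; exact sub_eq_zero.mp h''
        · right; exact sub_eq_zero.mp h'
      · rintro (rfl | rfl) <;> ring
    rw [hpair]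
    refine Set.ncard_pair ?_
    rw [ha, hb]
    intro h
    have h0 : Complex.I * ((Real.sqrt 11 : ℝ) : ℂ) = 0 := by
      linear_combination (5/4 : ℂ) * h
    have : ((Real.sqrt 11 : ℝ) : ℂ) = 0 := by
      rcases mul_eq_zero.mp h0 with h' | h'
      · exact absurd h' Complex.I_ne_zero
      · exact h'
    have h11' : (11 : ℂ) = 0 := by rw [← h11, this]; ring
    norm_num at h11'
end

section
/- The set {t ∈ ℂ : x₀(t) = x₃(t) and y₀(t) = y₃(t)} equals {4}, and the set {t ∈ ℂ : x₀(t) = x₃(t) and y₀(t) = −y₃(t)} equals {28/5}; in particular each has exactly one element. Consequently the triple (C₃, L₃; 𝒬) has splitting type (1, 1). -/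
/-- `C₃⁺ ∩ L₃⁺ = {4}` and `C₃⁺ ∩ L₃⁻ = {28/5}`, each a single point:
the triple `(C₃, L₃; 𝒬)` has splitting type `(1, 1)`. -/
theorem splitting_type_C3_L3 :
    {t : ℂ | x0 t = x3 t ∧ y0 t = y3 t} = {4} ∧
    {t : ℂ | x0 t = x3 t ∧ y0 t = -y3 t} = {28 / 5} ∧
    Set.ncard {t : ℂ | x0 t = x3 t ∧ y0 t = y3 t} = 1 ∧
    Set.ncard {t : ℂ | x0 t = x3 t ∧ y0 t = -y3 t} = 1 := by
  have h1 : {t : ℂ | x0 t = x3 t ∧ y0 t = y3 t} = {4} := by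
    ext t
    simp only [Set.mem_setOf_eq, Set.mem_singleton_iff, x0, x3, y0, y3]
    constructor
    · rintro ⟨hx, hy⟩
      have h : (t - 4) * (5 * t - 28) = 0 := by linear_combination 4 * hx
      rcases mul_eq_zero.mp h with h | h
      · linear_combination h
      · exfalso
        have ht : t = 28 / 5 := by linear_combination h / 5
        rw [ht] at hy; norm_num at hy
    · rintro rfl; norm_num
  have h2 : {t : ℂ | x0 t = x3 t ∧ y0 t = -y3 t} = {28 / 5} := by
    ext t
    simp only [Set.mem_setOf_eq, Set.mem_singleton_iff, x0, x3, y0, y3]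
    constructor
    · rintro ⟨hx, hy⟩
      have h : (t - 4) * (5 * t - 28) = 0 := by linear_combination 4 * hx
      rcases mul_eq_zero.mp h with h | h
      · exfalso
        have ht : t = 4 := by linear_combination h
        rw [ht] at hy; norm_num at hy
      · linear_combination h / 5
    · rintro rfl; norm_num
  exact ⟨h1, h2, by rw [h1]; exact Set.ncard_singleton 4,
    by rw [h2]; exact Set.ncard_singleton _⟩
end

section
/- The set {t ∈ ℂ : x₀(t) = x₄(t) and y₀(t) = y₄(t)} equals {52/25}, and the set {t ∈ ℂ : x₀(t) = x₄(t) and y₀(t) = −y₄(t)} equals {12/5}; in particular each has exactly one element. Consequently the triple (C₃, L₄; 𝒬) has splitting type (1, 1). -/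
/-- `C₃⁺ ∩ L₄⁺ = {52/25}` and `C₃⁺ ∩ L₄⁻ = {12/5}`, each a single point:
the triple `(C₃, L₄; 𝒬)` has splitting type `(1, 1)`. -/
theorem splitting_type_C3_L4 :
    {t : ℂ | x0 t = x4 t ∧ y0 t = y4 t} = {52 / 25} ∧
    {t : ℂ | x0 t = x4 t ∧ y0 t = -y4 t} = {12 / 5} ∧
    Set.ncard {t : ℂ | x0 t = x4 t ∧ y0 t = y4 t} = 1 ∧
    Set.ncard {t : ℂ | x0 t = x4 t ∧ y0 t = -y4 t} = 1 := by
  have h1 : {t : ℂ | x0 t = x4 t ∧ y0 t = y4 t} = {52 / 25} := by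
    ext t
    simp only [Set.mem_setOf_eq, Set.mem_singleton_iff, x0, x4, y0, y4]
    constructor
    · rintro ⟨hx, hy⟩
      have hroots : (t - 12 / 5) * (t - 52 / 25) = 0 := by linear_combination (4/5 : ℂ) * hx
      rcases mul_eq_zero.mp hroots with h | h
      · exfalso
        have ht : t = 12 / 5 := sub_eq_zero.mp h
        rw [ht] at hy
        norm_num at hy
      · linear_combination h
    · rintro rfl
      constructor <;> norm_num
  have h2 : {t : ℂ | x0 t = x4 t ∧ y0 t = -y4 t} = {12 / 5} := by
    ext t
    simp only [Set.mem_setOf_eq, Set.mem_singleton_iff, x0, x4, y0, y4]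
    constructor
    · rintro ⟨hx, hy⟩
      have hroots : (t - 12 / 5) * (t - 52 / 25) = 0 := by linear_combination (4/5 : ℂ) * hx
      rcases mul_eq_zero.mp hroots with h | h
      · linear_combination h
      · exfalso
        have ht : t = 52 / 25 := sub_eq_zero.mp h
        rw [ht] at hy
        norm_num at hy
    · rintro rfl
      constructor <;> norm_num
  refine ⟨h1, h2, ?_, ?_⟩ <;> simp [h1, h2]
end
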